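/- Fix a linear order ≺ on the set of words over an alphabet Σ such that for every word w the set {v | v ≺ w} is finite, let τ be a binary relation on words that is input-decreasing with respect to ≺, and fix a language M. If L ⊆ M is a τ-independent language, then the language μ^*(L) = ⋃_{i≥0} μ^i(L) is τ-independent, contains L, and is P_τ-maximal relative to M. -/

import Mathlib

/-!
Starting from an independent `L ⊆ M`, each application of `μ` keeps the language inside `M`,
independent, and only adds words, so `μ^*(L)` is an increasing union of independent languages.
Maximality amounts to `ind(μ^*(L)) ⊆ μ^*(L)`, proved by well-founded induction along `≺`.
A word `w ∈ ind(μ^*(L))` that never enters the chain lies in every `ind(μ^i(L))` but never in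
`μ(μ^i(L))`, so at every stage it has a `τ`-successor in `ind(μ^i(L))`. These successors are
`≺`-smaller than `w`, hence finitely many, and `ind(μ^i(L))` decreases in `i`, so one successor
`x` lies in all of them, i.e. in `ind(μ^*(L))`. By induction `x ∈ μ^*(L)`, contradicting
`w ∈ ind(μ^*(L))`.
-/

open Set

/-- Image of a language under a binary word relation: τ(X) = {y | ∃ x ∈ X, τ(x,y)}. -/
def img {α : Type*} (τ : List α → List α → Prop) (X : Set (List α)) : Set (List α) :=
  {y | ∃ x ∈ X, τ x y}

/-- Inverse image: τ⁻¹(X) = {y | ∃ x ∈ X, τ(y,x)}. -/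
def pre {α : Type*} (τ : List α → List α → Prop) (X : Set (List α)) : Set (List α) :=
  {y | ∃ x ∈ X, τ y x}

/-- ind(X) = M \ (τ(X) ∪ τ⁻¹(X)). -/
def ind {α : Type*} (τ : List α → List α → Prop) (M X : Set (List α)) : Set (List α) :=
  M \ (img τ X ∪ pre τ X)

/-- The max-min operator μ(X) = ind(X) \ τ⁻¹(ind(X)). -/
def mu {α : Type*} (τ : List α → List α → Prop) (M X : Set (List α)) : Set (List α) :=
  ind τ M X \ pre τ (ind τ M X)

/-- σ_X(A) = τ⁻¹(A) ∩ ind(X). -/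
def sig {α : Type*} (τ : List α → List α → Prop) (M X A : Set (List α)) : Set (List α) :=
  pre τ A ∩ ind τ M X

/-- Φ^*(A) = ⋃_{i≥0} Φ^i(A). -/
def opStar {α : Type*} (Φ : Set (List α) → Set (List α)) (A : Set (List α)) : Set (List α) :=
  ⋃ i : ℕ, Φ^[i] A

/-- Φ^+(A) = ⋃_{i≥1} Φ^i(A). -/
def opPlus {α : Type*} (Φ : Set (List α) → Set (List α)) (A : Set (List α)) : Set (List α) :=
  ⋃ i ≥ 1, Φ^[i] A

/-- Φ^∩(A) = ⋂_{i≥1} Φ^i(A). -/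
def opInter {α : Type*} (Φ : Set (List α) → Set (List α)) (A : Set (List α)) : Set (List α) :=
  ⋂ i ≥ 1, Φ^[i] A

/-- Φ^{≥k}(A) = ⋃_{i≥k} Φ^i(A). -/
def opGe {α : Type*} (Φ : Set (List α) → Set (List α)) (k : ℕ) (A : Set (List α)) : Set (List α) :=
  ⋃ i ≥ k, Φ^[i] A

/-- A language is τ-independent if τ(L) ∩ L = ∅. -/
def indep {α : Type*} (τ : List α → List α → Prop) (L : Set (List α)) : Prop :=
  img τ L ∩ L = ∅

/-- τ is smooth (relative to M) if σ_X^∩(ind(X)) ⊆ σ_X^*(μ(X)) for every language X. -/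
def smooth {α : Type*} (τ : List α → List α → Prop) (M : Set (List α)) : Prop :=
  ∀ X : Set (List α), opInter (sig τ M X) (ind τ M X) ⊆ opStar (sig τ M X) (mu τ M X)

/-- L is P_τ-maximal relative to M: L ⊆ M, L is τ-independent, and no word of M \ L
can be added to L keeping τ-independence. -/
def maximalIndep {α : Type*} (τ : List α → List α → Prop) (M L : Set (List α)) : Prop :=
  L ⊆ M ∧ indep τ L ∧ ∀ w ∈ M \ L, ¬ indep τ (L ∪ {w})

open Filter

theorem wellFounded_lt_of_finite_Iio {β : Type*} [Preorder β] (h : ∀ b : β, (Iio b).Finite) :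
    WellFounded ((· < ·) : β → β → Prop) :=
  Subrelation.wf (fun {_ w} hlt => ncard_lt_ncard (Iio_ssubset_Iio hlt) (h w))
    (measure fun b => (Iio b).ncard).wf

theorem Set.Finite.inter_iInter_nonempty_of_antitone {β : Type*} {S : Set β} (hS : S.Finite)
    {D : ℕ → Set β} (hD : Antitone D) (h : ∀ i, (S ∩ D i).Nonempty) :
    (S ∩ ⋂ i, D i).Nonempty := by
  by_contra hempty
  have hout : ∀ x ∈ S, ∀ᶠ n in atTop, x ∉ D n := by
    intro x hx
    obtain ⟨i, hi⟩ : ∃ i, x ∉ D i := by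
      by_contra! hall
      exact hempty ⟨x, hx, mem_iInter.2 hall⟩
    exact eventually_atTop.2 ⟨i, fun n hn hxn => hi (hD hn hxn)⟩
  obtain ⟨n, hn⟩ := (hS.eventually_all.2 hout).exists
  obtain ⟨x, hxS, hxD⟩ := h n
  exact hn x hxS hxD

section Independence

variable {α : Type*} {τ : List α → List α → Prop} {M L X : Set (List α)}

theorem indep_iff : indep τ L ↔ ∀ x ∈ L, ∀ y ∈ L, ¬ τ x y := by
  simp only [indep, img, eq_empty_iff_forall_notMem, mem_inter_iff, mem_ofPred_eq]
  exact ⟨fun h x hx y hy hxy => h y ⟨⟨x, hx, hxy⟩, hy⟩, fun h y ⟨⟨x, hx, hxy⟩, hy⟩ => h x hx y hy hxy⟩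

theorem indep_iUnion {ι : Type*} {C : ι → Set (List α)} (hC : Directed (· ⊆ ·) C)
    (hind : ∀ i, indep τ (C i)) : indep τ (⋃ i, C i) := by
  rw [indep_iff]
  intro x hx y hy hxy
  obtain ⟨i, hi⟩ := mem_iUnion.1 hx
  obtain ⟨j, hj⟩ := mem_iUnion.1 hy
  obtain ⟨k, hik, hjk⟩ := hC i j
  exact indep_iff.1 (hind k) x (hik hi) y (hjk hj) hxy

theorem ind_antitone : Antitone (ind τ M) := by
  rintro X Y hXY z ⟨hzM, hz⟩
  refine ⟨hzM, ?_⟩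
  rintro (⟨x, hx, hxz⟩ | ⟨x, hx, hzx⟩)
  · exact hz (Or.inl ⟨x, hXY hx, hxz⟩)
  · exact hz (Or.inr ⟨x, hXY hx, hzx⟩)

theorem ind_iUnion {ι : Type*} [Nonempty ι] (C : ι → Set (List α)) :
    ind τ M (⋃ i, C i) = ⋂ i, ind τ M (C i) := by
  ext w
  simp only [ind, img, pre, mem_iInter, Set.mem_sdiff, mem_union, mem_ofPred_eq, mem_iUnion]
  constructor
  · rintro ⟨hwM, hw⟩ i
    exact ⟨hwM, fun h => hw (h.imp (fun ⟨x, hx, hxw⟩ => ⟨x, ⟨i, hx⟩, hxw⟩)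
      (fun ⟨x, hx, hwx⟩ => ⟨x, ⟨i, hx⟩, hwx⟩))⟩
  · intro h
    refine ⟨(h (Classical.arbitrary ι)).1, ?_⟩
    rintro (⟨x, ⟨i, hx⟩, hxw⟩ | ⟨x, ⟨i, hx⟩, hwx⟩)
    · exact (h i).2 (Or.inl ⟨x, hx, hxw⟩)
    · exact (h i).2 (Or.inr ⟨x, hx, hwx⟩)

theorem mem_ind_of_indep_union {w : List α} (hwM : w ∈ M) (h : indep τ (L ∪ {w})) :
    w ∈ ind τ M L := by
  have h' := indep_iff.1 h
  refine ⟨hwM, ?_⟩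
  rintro (⟨x, hx, hxw⟩ | ⟨x, hx, hwx⟩)
  · exact h' x (Or.inl hx) w (Or.inr rfl) hxw
  · exact h' w (Or.inr rfl) x (Or.inl hx) hwx

theorem subset_ind (hXM : X ⊆ M) (hX : indep τ X) : X ⊆ ind τ M X :=
  fun y hy => mem_ind_of_indep_union (hXM hy) (by rwa [union_eq_self_of_subset_right
    (singleton_subset_iff.2 hy)])

theorem mu_subset : mu τ M X ⊆ M :=
  fun _ hz => hz.1.1

theorem indep_mu : indep τ (mu τ M X) :=
  indep_iff.2 fun _ hx y hy hxy => hx.2 ⟨y, hy.1, hxy⟩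

-- A word of `X` has no `τ`-successor in `ind(X)`, since that successor would lie in `τ(X)`.
theorem subset_mu (hXM : X ⊆ M) (hX : indep τ X) : X ⊆ mu τ M X :=
  fun y hy => ⟨subset_ind hXM hX hy, fun ⟨_, hx, hyx⟩ => hx.2 (Or.inl ⟨y, hy, hyx⟩)⟩

theorem maximalIndep_of_ind_subset (hXM : X ⊆ M) (hX : indep τ X) (hmax : ind τ M X ⊆ X) :
    maximalIndep τ M X :=
  ⟨hXM, hX, fun _ ⟨hwM, hwX⟩ h => hwX (hmax (mem_ind_of_indep_union hwM h))⟩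

end Independence

section Iteration

variable {α : Type*} {τ : List α → List α → Prop} {M L : Set (List α)}

theorem iterate_mu_subset (hLM : L ⊆ M) : ∀ i, (mu τ M)^[i] L ⊆ M
  | 0 => hLM
  | _ + 1 => by rw [Function.iterate_succ_apply']; exact mu_subset

theorem indep_iterate_mu (hL : indep τ L) : ∀ i, indep τ ((mu τ M)^[i] L)
  | 0 => hL
  | _ + 1 => by rw [Function.iterate_succ_apply']; exact indep_mu

theorem monotone_iterate_mu (hLM : L ⊆ M) (hL : indep τ L) :
    Monotone fun i => (mu τ M)^[i] L :=
  monotone_nat_of_le_succ fun i => by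
    rw [Function.iterate_succ_apply']
    exact subset_mu (iterate_mu_subset hLM i) (indep_iterate_mu hL i)

theorem opStar_mu_subset (hLM : L ⊆ M) : opStar (mu τ M) L ⊆ M :=
  iUnion_subset (iterate_mu_subset hLM)

theorem indep_opStar_mu (hLM : L ⊆ M) (hL : indep τ L) : indep τ (opStar (mu τ M) L) :=
  indep_iUnion (monotone_iterate_mu hLM hL).directed_le (indep_iterate_mu hL)

theorem ind_opStar_mu_subset (hLM : L ⊆ M) (hL : indep τ L) (hfin : ∀ w, {x | τ w x}.Finite)
    (hwf : WellFounded (flip τ)) : ind τ M (opStar (mu τ M) L) ⊆ opStar (mu τ M) L := by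
  set C : ℕ → Set (List α) := fun i => (mu τ M)^[i] L
  intro w hw
  induction w using hwf.induction with
  | _ w ih =>
  by_contra hwC
  have hsucc : ∀ i, ({x | τ w x} ∩ ind τ M (C i)).Nonempty := by
    intro i
    have hwi : w ∈ ind τ M (C i) := ind_antitone (subset_iUnion C i) hw
    have hwmu : w ∉ mu τ M (C i) := fun h =>
      hwC (mem_iUnion.2 ⟨i + 1, by rwa [Function.iterate_succ_apply']⟩)
    obtain ⟨x, hx, hwx⟩ : w ∈ pre τ (ind τ M (C i)) := not_not.1 fun h => hwmu ⟨hwi, h⟩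
    exact ⟨x, hwx, hx⟩
  obtain ⟨x, hwx, hx⟩ := (hfin w).inter_iInter_nonempty_of_antitone
    (ind_antitone.comp_monotone (monotone_iterate_mu hLM hL)) hsucc
  have hxind : x ∈ ind τ M (opStar (mu τ M) L) := by rwa [opStar, ind_iUnion]
  exact hw.2 (Or.inr ⟨x, ih x hwx hxind, hwx⟩)

end Iteration

theorem stmt17 {α : Type*} (ord : LinearOrder (List α))
    (hfin : ∀ w : List α, {v : List α | ord.lt v w}.Finite)
    (τ : List α → List α → Prop)
    (hdec : ∀ x y : List α, τ x y → ord.lt y x)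
    (M L : Set (List α)) (hLM : L ⊆ M) (hL : indep τ L) :
    indep τ (opStar (mu τ M) L) ∧
    L ⊆ opStar (mu τ M) L ∧
    maximalIndep τ M (opStar (mu τ M) L) := by
  let _ := ord
  have hwf : WellFounded (flip τ) :=
    Subrelation.wf (fun {_ _} h => hdec _ _ h) (wellFounded_lt_of_finite_Iio hfin)
  have hfinτ : ∀ w, {x | τ w x}.Finite := fun w => (hfin w).subset (hdec w)
  exact ⟨indep_opStar_mu hLM hL, subset_iUnion (fun i => (mu τ M)^[i] L) 0,
    maximalIndep_of_ind_subset (opStar_mu_subset hLM) (indep_opStar_mu hLM hL)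
      (ind_opStar_mu_subset hLM hL hfinτ hwf)⟩
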